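/- Let w be a path in the KTS K of an information diagram I, and P an information flow kind. Then w ⊨_l enc(P) if and only if π_w ▷_I P, where π_w is the diagram path obtained from w by replacing each action op by the singleton operation set {op}. -/
import Mathlib


set_option autoImplicit true

section IFCIL

variable {N O S A Pr : Type}

/-- Node patterns: a concrete node or the wildcard `*`. -/
inductive NodePat (N : Type) where
  | star : NodePat N
  | node : N → NodePat N

/-- An arc of an information flow diagram: source, nonempty set of operations, target. -/
abbrev Arc (N O : Type) := N × Set O × N

/-- An information flow diagram `I = (N, ta, E)`. -/
structure IFD (N O : Type) where
  ta : N → Set N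
  E : Set (Arc N O)

/-- A node pattern `m` matches a node `n`: `m = *` or `n ∈ ta(m)`. -/
def NodePat.mat (I : IFD N O) : NodePat N → N → Prop
  | .star, _ => True
  | .node m, n => n ∈ I.ta m

/-- Consecutive arcs have matching endpoints. -/
def Chained : List (Arc N O) → Prop
  | [] => True
  | [_] => True
  | a :: b :: rest => a.2.2 = b.1 ∧ Chained (b :: rest)

/-- A path in `I`: nonempty, chained sequence of arcs of `I`. -/
def PathIn (I : IFD N O) (π : List (Arc N O)) : Prop :=
  π ≠ [] ∧ Chained π ∧ ∀ a ∈ π, a ∈ I.E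

/-- Arrows: single step `>` or multi step `+>`. -/
inductive Arrow where
  | single : Arrow
  | multi : Arrow

/-- Path kinds `P ::= n [o]> n' | n +[o]> n' | P₁ P₂`. -/
inductive Kind (N O : Type) where
  | atom : NodePat N → Arrow → Set O → NodePat N → Kind N O
  | comp : Kind N O → Kind N O → Kind N O

/-- The kind satisfaction relation `π ▷_I P`. -/
inductive KSat (I : IFD N O) : List (Arc N O) → Kind N O → Prop where
  | step : NodePat.mat I m n → NodePat.mat I m' n' → (o ∩ o').Nonempty →
      KSat I [(n, o, n')] (.atom m .single o' m')
  | plusBase : KSat I [(n, o, n')] (.atom m .single o' m') →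
      KSat I [(n, o, n')] (.atom m .multi o' m')
  | plusStep : KSat I [(n, o, n')] (.atom m .single o' .star) →
      KSat I π (.atom .star .multi o' m') →
      KSat I ((n, o, n') :: π) (.atom m .multi o' m')
  | comp : KSat I π₁ P₁ → KSat I π₂ P₂ → KSat I (π₁ ++ π₂) (.comp P₁ P₂)

/-- Node refinement: `n ⪯_n n` and `n ⪯_n *`. -/
def NRef : NodePat N → NodePat N → Prop := fun a b => a = b ∨ b = .star

/-- Arrow refinement: reflexivity and `> ⪯_a +>`. -/
inductive ARef : Arrow → Arrow → Prop where
  | refl (a) : ARef a a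
  | up : ARef .single .multi

/-- Kind refinement `⪯_P`: rules (comp), (P-1)–(P-4), closed under reflexivity
and transitivity. -/
inductive KRef : Kind N O → Kind N O → Prop where
  | refl (P) : KRef P P
  | trans : KRef P Q → KRef Q R → KRef P R
  | comp : KRef P₁ P₁' → KRef P₂ P₂' → KRef (.comp P₁ P₂) (.comp P₁' P₂')
  | atom : NRef n₁ n₁' → NRef n₂ n₂' → ARef w w' → o ⊆ o' →
      KRef (.atom n₁ w o n₂) (.atom n₁' w' o' n₂')
  | p2 : NRef n₁ n₁' → NRef n₂ n₂' → o₁ ⊆ o₁' → o₁ ⊆ o₂' → o₂ ⊆ o₂' →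
      KRef (.comp (.atom n₁ .multi o₁ .star) (.atom .star .single o₂ n₂))
           (.comp (.atom n₁' .single o₁' .star) (.atom .star .multi o₂' n₂'))
  | p3 : NRef n₁ n₁' → NRef n₂ n₂' → o₁ ⊆ o' → o₂ ⊆ o' →
      KRef (.comp (.atom n₁ .multi o₁ .star) (.atom .star .multi o₂ n₂))
           (.atom n₁' .multi o' n₂')
  | p4 : NRef n₁ n₁' → NRef n₂ n₂' → o₁ ⊆ o₁' → o₂ ⊆ o₂' → o₂ ⊆ o₁' →
      KRef (.comp (.atom n₁ .single o₁ .star) (.atom .star .multi o₂ n₂))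
           (.comp (.atom n₁' .multi o₁' .star) (.atom .star .single o₂' n₂'))

/-- IFL requirements `R ::= P | ~P | P : P'`. -/
inductive Req (N O : Type) where
  | ex : Kind N O → Req N O
  | no : Kind N O → Req N O
  | constr : Kind N O → Kind N O → Req N O

/-- Validity `I ⊨ R`. -/
def Valid (I : IFD N O) : Req N O → Prop
  | .ex P => ∃ π, PathIn I π ∧ KSat I π P
  | .no P => ¬ ∃ π, PathIn I π ∧ KSat I π P
  | .constr P P' => ∀ π, PathIn I π → KSat I π P → KSat I π P'

/-- Requirement refinement `⪯`: rules (R-1)–(R-3), closed under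
reflexivity and transitivity. -/
inductive RRef : Req N O → Req N O → Prop where
  | refl (R) : RRef R R
  | trans : RRef R₁ R₂ → RRef R₂ R₃ → RRef R₁ R₃
  | ex : KRef P P' → RRef (.ex P) (.ex P')
  | no : KRef P P' → RRef (.no P') (.no P)
  | constr : KRef P₁ P₁' → KRef P₂ P₂' → RRef (.constr P₁' P₂) (.constr P₁ P₂')

/-- The equivalent, right-linear grammar of kinds:
`P ::= n [o]> n' | n +[o]> n' | (n [o]> n') P | (n +[o]> n') P`. -/
inductive LKind (N O : Type) where
  | step : NodePat N → Set O → NodePat N → LKind N O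
  | plus : NodePat N → Set O → NodePat N → LKind N O
  | stepC : NodePat N → Set O → NodePat N → LKind N O → LKind N O
  | plusC : NodePat N → Set O → NodePat N → LKind N O → LKind N O

/-- Kind satisfaction `π ▷_I P` for the right-linear grammar. -/
inductive LSat (I : IFD N O) : List (Arc N O) → LKind N O → Prop where
  | step : NodePat.mat I m n → NodePat.mat I m' n' → (o ∩ o').Nonempty →
      LSat I [(n, o, n')] (.step m o' m')
  | plusBase : LSat I [(n, o, n')] (.step m o' m') →
      LSat I [(n, o, n')] (.plus m o' m')
  | plusStep : LSat I [(n, o, n')] (.step m o' .star) →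
      LSat I π (.plus .star o' m') →
      LSat I ((n, o, n') :: π) (.plus m o' m')
  | stepC : LSat I [(n, o, n')] (.step m o' .star) → LSat I π P →
      LSat I ((n, o, n') :: π) (.stepC m o' m' P)
  | plusCBase : LSat I π (.stepC m o' m' P) → LSat I π (.plusC m o' m' P)
  | plusCStep : LSat I [(n, o, n')] (.step m o' .star) →
      LSat I π (.plusC .star o' .star P) →
      LSat I ((n, o, n') :: π) (.plusC m o' m' P)

/-- LTL formulas over atomic propositions `Pr` and actions `A`;
`acts o` stands for the disjunction `⋁_{op ∈ o} (op)`. -/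
inductive LTL (Pr A : Type) where
  | tt : LTL Pr A
  | atom : Pr → LTL Pr A
  | acts : Set A → LTL Pr A
  | and : LTL Pr A → LTL Pr A → LTL Pr A
  | or : LTL Pr A → LTL Pr A → LTL Pr A
  | not : LTL Pr A → LTL Pr A
  | next : LTL Pr A → LTL Pr A
  | untl : LTL Pr A → LTL Pr A → LTL Pr A

/-- A finite KTS path: a state followed by a list of (action, state) steps. -/
structure FinPath (S A : Type) where
  first : S
  rest : List (A × S)

/-- Drop the first `k` transitions of a finite path. -/
def FinPath.drop : FinPath S A → ℕ → FinPath S A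
  | w, 0 => w
  | ⟨s, []⟩, _ + 1 => ⟨s, []⟩
  | ⟨_, (_, s') :: r⟩, k + 1 => FinPath.drop ⟨s', r⟩ k

/-- Finite-path LTL semantics `w ⊨_l φ` with labeling `L`. -/
def FSat (L : S → Set Pr) : LTL Pr A → FinPath S A → Prop
  | .tt, _ => True
  | .atom p, w => p ∈ L w.first
  | .acts o, w => ∃ a s r, w.rest = (a, s) :: r ∧ a ∈ o
  | .and φ ψ, w => FSat L φ w ∧ FSat L ψ w
  | .or φ ψ, w => FSat L φ w ∨ FSat L ψ w
  | .not φ, w => ¬ FSat L φ w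
  | .next φ, w => ∃ a s r, w.rest = (a, s) :: r ∧ FSat L φ ⟨s, r⟩
  | .untl φ ψ, w => ∃ k, k ≤ w.rest.length ∧ FSat L ψ (w.drop k) ∧
      ∀ j < k, FSat L φ (w.drop j)

/-- The LTL encoding `enc(P)` of flow kinds (finite-path version,
with end marker `¬X(true)`). -/
def encK : LKind N O → LTL (NodePat N) O
  | .step n o n' =>
      .and (.atom n) (.and (.acts o) (.next (.and (.atom n') (.not (.next .tt)))))
  | .plus n o n' =>
      .and (.atom n) (.and (.acts o)
        (.next (.untl (.acts o) (.and (.atom n') (.not (.next .tt))))))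
  | .stepC n o _ P => .and (.atom n) (.and (.acts o) (.next (encK P)))
  | .plusC n o _ P =>
      .and (.atom n) (.and (.acts o) (.next (.untl (.acts o) (encK P))))

/-- The labeling `Λ` of the KTS of `I`: `M ∈ Λ(n)` iff `n ∈ ta(M)`
(with the wildcard true everywhere). -/
def labelOf (I : IFD N O) : N → Set (NodePat N) :=
  fun n => {p | NodePat.mat I p n}

/-- `encRest π r`: the steps `r` traverse the arcs `π` choosing one
operation from each arc's operation set. -/
def encRest : List (Arc N O) → List (O × N) → Prop
  | [], [] => True
  | (_, o, n') :: π, (op, s) :: r => op ∈ o ∧ s = n' ∧ encRest π r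
  | _, _ => False

/-- `w ∈ enc(π)` : the KTS path `w` results from the diagram path `π`
by choosing one operation from each arc's operation set. -/
def encPath (π : List (Arc N O)) (w : FinPath N O) : Prop :=
  match π with
  | [] => False
  | (n, _, _) :: _ => w.first = n ∧ encRest π w.rest

/-- Auxiliary for `π_w`. -/
def diagOf : N → List (O × N) → List (Arc N O)
  | _, [] => []
  | s, (op, s') :: r => (s, ({op} : Set O), s') :: diagOf s' r

/-- `π_w`: the diagram path obtained from a KTS path by replacing each
action `op` with the singleton `{op}`. -/
def FinPath.toDiagram (w : FinPath N O) : List (Arc N O) := diagOf w.first w.rest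

/-- A transition of the KTS of `I`: `E' = {(n, op, n') | (n,o,n') ∈ E, op ∈ o}`. -/
def ktsStep (I : IFD N O) (s : N) (op : O) (s' : N) : Prop :=
  ∃ o, (s, o, s') ∈ I.E ∧ op ∈ o

def ktsRest (I : IFD N O) : N → List (O × N) → Prop
  | _, [] => True
  | s, (op, s') :: r => ktsStep I s op s' ∧ ktsRest I s' r

/-- `w` is a (finite) path of the KTS of `I`. -/
def KTSPath (I : IFD N O) (w : FinPath N O) : Prop := ktsRest I w.first w.rest

/-- `K ⊨_l φ`: every finite path of the KTS of `I` satisfies `φ`. -/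
def KModels (I : IFD N O) (φ : LTL (NodePat N) O) : Prop :=
  ∀ w, KTSPath I w → FSat (labelOf I) φ w

/-- IFL requirements over right-linear kinds. -/
inductive LReq (N O : Type) where
  | ex : LKind N O → LReq N O
  | no : LKind N O → LReq N O
  | constr : LKind N O → LKind N O → LReq N O

/-- Validity `I ⊨ R` for right-linear requirements. -/
def LValid (I : IFD N O) : LReq N O → Prop
  | .ex P => ∃ π, PathIn I π ∧ LSat I π P
  | .no P => ¬ ∃ π, PathIn I π ∧ LSat I π P
  | .constr P P' => ∀ π, PathIn I π → LSat I π P → LSat I π P'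

/-- Satisfaction `K ⊢ R` in the finite-path KTS semantics. -/
def KEnt (I : IFD N O) : LReq N O → Prop
  | .ex P => ¬ KModels I (.not (encK P))
  | .no P => KModels I (.not (encK P))
  | .constr P P' => KModels I (.or (.not (encK P)) (encK P'))

/-- Infinite KTS paths. -/
structure InfPath (S A : Type) where
  state : ℕ → S
  act : ℕ → A

def InfPath.drop (w : InfPath S A) (k : ℕ) : InfPath S A :=
  ⟨fun i => w.state (i + k), fun i => w.act (i + k)⟩

/-- Infinite-path LTL semantics. -/
def ISat (L : S → Set Pr) : LTL Pr A → InfPath S A → Prop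
  | .tt, _ => True
  | .atom p, w => p ∈ L (w.state 0)
  | .acts o, w => w.act 0 ∈ o
  | .and φ ψ, w => ISat L φ w ∧ ISat L ψ w
  | .or φ ψ, w => ISat L φ w ∨ ISat L ψ w
  | .not φ, w => ¬ ISat L φ w
  | .next φ, w => ISat L φ (w.drop 1)
  | .untl φ ψ, w => ∃ k, ISat L ψ (w.drop k) ∧ ∀ j < k, ISat L φ (w.drop j)

/-- Atomic propositions for the sink-extended KTS: node patterns plus
the distinguished proposition `ι`. -/
abbrev SProp (N : Type) := NodePat N ⊕ Unit

/-- Labeling of the sink-extended KTS: the sink (`none`) is labeled only by `ι`. -/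
def labelι (I : IFD N O) : Option N → Set (SProp N)
  | some n => {p | ∃ q, p = Sum.inl q ∧ NodePat.mat I q n}
  | none => {Sum.inr ()}

/-- The encoding `enc_ι(P)` of flow kinds for the sink-extended KTS:
identical to `enc` except that `¬X(true)` is replaced by `X(ι)`. -/
def encι : LKind N O → LTL (SProp N) O
  | .step n o n' =>
      .and (.atom (.inl n)) (.and (.acts o)
        (.next (.and (.atom (.inl n')) (.next (.atom (.inr ()))))))
  | .plus n o n' =>
      .and (.atom (.inl n)) (.and (.acts o)
        (.next (.untl (.acts o) (.and (.atom (.inl n')) (.next (.atom (.inr ())))))))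
  | .stepC n o _ P => .and (.atom (.inl n)) (.and (.acts o) (.next (encι P)))
  | .plusC n o _ P =>
      .and (.atom (.inl n)) (.and (.acts o) (.next (.untl (.acts o) (encι P))))

/-- The states of a finite path. -/
def FinPath.states (w : FinPath S A) : List S := w.first :: w.rest.map Prod.snd

/-- `w·ι^ω`: the finite path `w` followed by the sink forever
(with arbitrary operation labels `ops` into `ι`). -/
def appendSink (w : FinPath N O) (ops : ℕ → O) : InfPath (Option N) O where
  state := fun i => w.states[i]?
  act := fun i => if h : i < w.rest.length then (w.rest.get ⟨i, h⟩).1 else ops i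

/-- Transitions of the sink-extended KTS `K_ι`: the transitions of `K`,
transitions from every state to the sink with every operation, and the
self-loop on the sink. -/
def sinkStep (I : IFD N O) : Option N → O → Option N → Prop
  | some s, op, some s' => ktsStep I s op s'
  | _, _, none => True
  | none, _, some _ => False

/-- `w` is an infinite path of the sink-extended KTS `K_ι`. -/
def KιPath (I : IFD N O) (w : InfPath (Option N) O) : Prop :=
  ∀ i, sinkStep I (w.state i) (w.act i) (w.state (i + 1))

/-- `K_ι ⊨_l φ`: every infinite path of `K_ι` satisfies `φ`. -/
def KιModels (I : IFD N O) (φ : LTL (SProp N) O) : Prop :=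
  ∀ w, KιPath I w → ISat (labelι I) φ w

/-- Satisfaction `K_ι ⊢ R` in the infinite-path, sink-extended semantics. -/
def KιEnt (I : IFD N O) : LReq N O → Prop
  | .ex P => ¬ KιModels I (.not (encι P))
  | .no P => KιModels I (.not (encι P))
  | .constr P P' => KιModels I (.or (.not (encι P)) (encι P'))

/-- The leading node constraint of a kind. -/
def LKind.firstNode : LKind N O → NodePat N
  | .step n _ _ => n
  | .plus n _ _ => n
  | .stepC n _ _ _ => n
  | .plusC n _ _ _ => n

/-- The leading operation set of a kind. -/
def LKind.firstOps : LKind N O → Set O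
  | .step _ o _ => o
  | .plus _ o _ => o
  | .stepC _ o _ _ => o
  | .plusC _ o _ _ => o

end IFCIL


section AuxProof
variable {N O S A Pr : Type} {I : IFD N O}

lemma lsat_nil (P : LKind N O) : ¬ LSat I [] P := fun h => by
  cases h with
  | plusCBase h' => cases h'

@[simp] lemma fsat_tt (L : S → Set Pr) (w : FinPath S A) : FSat L (.tt) w ↔ True := Iff.rfl

@[simp] lemma fsat_atom (L : S → Set Pr) (p : Pr) (w : FinPath S A) :
    FSat L (.atom p) w ↔ p ∈ L w.first := Iff.rfl

@[simp] lemma fsat_and (L : S → Set Pr) (φ ψ : LTL Pr A) (w : FinPath S A) :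
    FSat L (.and φ ψ) w ↔ FSat L φ w ∧ FSat L ψ w := Iff.rfl

@[simp] lemma fsat_not (L : S → Set Pr) (φ : LTL Pr A) (w : FinPath S A) :
    FSat L (.not φ) w ↔ ¬ FSat L φ w := Iff.rfl

@[simp] lemma acts_nil (L : S → Set Pr) (o : Set A) (s : S) :
    FSat L (.acts o) (⟨s, []⟩ : FinPath S A) ↔ False := by simp [FSat]

@[simp] lemma acts_cons (L : S → Set Pr) (o : Set A) (s : S) (a : A) (s' : S)
    (r : List (A × S)) : FSat L (.acts o) (⟨s, (a, s') :: r⟩ : FinPath S A) ↔ a ∈ o := by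
  simp [FSat]

@[simp] lemma next_nil (L : S → Set Pr) (φ : LTL Pr A) (s : S) :
    FSat L (.next φ) (⟨s, []⟩ : FinPath S A) ↔ False := by simp [FSat]

@[simp] lemma next_cons (L : S → Set Pr) (φ : LTL Pr A) (s : S) (a : A) (s' : S)
    (r : List (A × S)) :
    FSat L (.next φ) (⟨s, (a, s') :: r⟩ : FinPath S A) ↔ FSat L φ ⟨s', r⟩ := by
  constructor
  · rintro ⟨b, t, r2, heq, h⟩
    injection heq with h1 h2
    injection h1 with h3 h4
    subst h3; subst h4; subst h2
    exact h
  · intro h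
    exact ⟨a, s', r, rfl, h⟩

@[simp] lemma drop_zero (w : FinPath S A) : w.drop 0 = w := by
  obtain ⟨s, r⟩ := w
  cases r <;> rfl

@[simp] lemma drop_succ (s : S) (a : A) (s' : S) (r : List (A × S)) (k : ℕ) :
    FinPath.drop (⟨s, (a, s') :: r⟩ : FinPath S A) (k + 1) = FinPath.drop ⟨s', r⟩ k := rfl

@[simp] lemma untl_nil (L : S → Set Pr) (φ ψ : LTL Pr A) (s : S) :
    FSat L (.untl φ ψ) (⟨s, []⟩ : FinPath S A) ↔ FSat L ψ ⟨s, []⟩ := by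
  constructor
  · rintro ⟨k, hk, hψ, -⟩
    obtain rfl := Nat.le_zero.mp hk
    simpa using hψ
  · intro h
    exact ⟨0, Nat.le_refl _, by simpa using h, fun j hj => absurd hj (Nat.not_lt_zero _)⟩

@[simp] lemma untl_cons (L : S → Set Pr) (φ ψ : LTL Pr A) (s : S) (a : A) (s' : S)
    (r : List (A × S)) :
    FSat L (.untl φ ψ) (⟨s, (a, s') :: r⟩ : FinPath S A) ↔
      FSat L ψ ⟨s, (a, s') :: r⟩ ∨
        (FSat L φ ⟨s, (a, s') :: r⟩ ∧ FSat L (.untl φ ψ) (⟨s', r⟩ : FinPath S A)) := by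
  constructor
  · rintro ⟨k, hk, hψ, hφ⟩
    cases k with
    | zero => exact Or.inl (by simpa using hψ)
    | succ k' =>
      refine Or.inr ⟨by simpa using hφ 0 (Nat.succ_pos _), k',
        Nat.succ_le_succ_iff.mp (by simpa using hk), by simpa using hψ,
        fun j hj => by simpa using hφ (j + 1) (Nat.succ_lt_succ hj)⟩
  · rintro (h | ⟨hφ, k, hk, hψ, hrest⟩)
    · exact ⟨0, Nat.zero_le _, by simpa using h, fun j hj => absurd hj (Nat.not_lt_zero _)⟩
    · refine ⟨k + 1, by simpa using Nat.succ_le_succ hk, by simpa using hψ, fun j hj => ?_⟩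
      cases j with
      | zero => simpa using hφ
      | succ j' => simpa using hrest j' (Nat.lt_of_succ_lt_succ hj)

@[simp] lemma star_mem_label (I : IFD N O) (n : N) : NodePat.star ∈ labelOf I n := True.intro

lemma fsat_iff_lsat (I : IFD N O) (P : LKind N O) :
    ∀ (s : N) (r : List (O × N)),
      FSat (labelOf I) (encK P) ⟨s, r⟩ ↔ LSat I (diagOf s r) P := by
  induction P with
  | step m o m' =>
    intro s r
    match r with
    | [] => exact iff_of_false (by simp [encK]) (lsat_nil _)
    | [(a, s')] =>
      simp only [encK, fsat_and, fsat_atom, acts_cons, next_cons, next_nil, fsat_not,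
        not_false_iff, and_true, diagOf]
      constructor
      · rintro ⟨h1, h2, h3⟩
        exact LSat.step h1 h3 ⟨a, rfl, h2⟩
      · intro h
        cases h with
        | step h1 h2 h3 =>
          obtain ⟨b, hb, hbo⟩ := h3
          exact ⟨h1, hb ▸ hbo, h2⟩
    | (a, s') :: (b, t) :: r2 =>
      refine iff_of_false (by simp [encK]) (fun h => ?_)
      simp only [diagOf] at h
      cases h
  | plus m o m' =>
    intro s r
    induction r generalizing s m with
    | nil => exact iff_of_false (by simp [encK]) (lsat_nil _)
    | cons p r' ih =>
      obtain ⟨a, s'⟩ := p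
      have key : FSat (labelOf I) (encK (.plus m o m')) ⟨s, (a, s') :: r'⟩ ↔
          m ∈ labelOf I s ∧ a ∈ o ∧
            ((m' ∈ labelOf I s' ∧ r' = []) ∨
              FSat (labelOf I) (encK (.plus (.star : NodePat N) o m')) ⟨s', r'⟩) := by
        cases r' with
        | nil => simp [encK]
        | cons q r2 =>
          obtain ⟨b, t⟩ := q
          simp [encK]
      rw [key]
      constructor
      · rintro ⟨h1, ha, ⟨h2, rfl⟩ | hF⟩
        · exact LSat.plusBase (LSat.step h1 h2 ⟨a, rfl, ha⟩)
        · exact LSat.plusStep (LSat.step h1 True.intro ⟨a, rfl, ha⟩) ((ih _ _).mp hF)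
      · intro h
        cases r' with
        | nil =>
          simp only [diagOf] at h
          cases h with
          | plusBase h' =>
            cases h' with
            | step h1 h2 h3 =>
              obtain ⟨b, hb, hbo⟩ := h3
              exact ⟨h1, hb ▸ hbo, Or.inl ⟨h2, rfl⟩⟩
          | plusStep h' htail => exact absurd htail (lsat_nil _)
        | cons q r2 =>
          simp only [diagOf] at h
          cases h with
          | plusStep h' htail =>
            cases h' with
            | step h1 _ h3 =>
              obtain ⟨b, hb, hbo⟩ := h3
              exact ⟨h1, hb ▸ hbo, Or.inr ((ih _ _).mpr htail)⟩
  | stepC m o m2 P ihP =>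
    intro s r
    match r with
    | [] => exact iff_of_false (by simp [encK]) (lsat_nil _)
    | (a, s') :: r' =>
      simp only [encK, fsat_and, fsat_atom, acts_cons, next_cons, diagOf]
      constructor
      · rintro ⟨h1, ha, hP⟩
        exact LSat.stepC (LSat.step h1 True.intro ⟨a, rfl, ha⟩) ((ihP s' r').mp hP)
      · intro h
        cases r' with
        | nil =>
          simp only [diagOf] at h
          cases h with
          | stepC h' hP =>
            cases h' with
            | step h1 _ h3 =>
              obtain ⟨b, hb, hbo⟩ := h3
              exact ⟨h1, hb ▸ hbo, (ihP s' _).mpr hP⟩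
        | cons q r2 =>
          simp only [diagOf] at h
          cases h with
          | stepC h' hP =>
            cases h' with
            | step h1 _ h3 =>
              obtain ⟨b, hb, hbo⟩ := h3
              exact ⟨h1, hb ▸ hbo, (ihP s' _).mpr hP⟩
  | plusC m o m2 P ihP =>
    intro s r
    induction r generalizing s m m2 with
    | nil => exact iff_of_false (by simp [encK]) (lsat_nil _)
    | cons p r' ihr =>
      obtain ⟨a, s'⟩ := p
      have key : FSat (labelOf I) (encK (.plusC m o m2 P)) ⟨s, (a, s') :: r'⟩ ↔
          m ∈ labelOf I s ∧ a ∈ o ∧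
            (FSat (labelOf I) (encK P) ⟨s', r'⟩ ∨
              FSat (labelOf I)
                (encK (.plusC (.star : NodePat N) o (.star : NodePat N) P)) ⟨s', r'⟩) := by
        cases r' with
        | nil => simp [encK]
        | cons q r2 =>
          obtain ⟨b, t⟩ := q
          simp [encK]
      rw [key]
      constructor
      · rintro ⟨h1, ha, hP | hF⟩
        · exact LSat.plusCBase
            (LSat.stepC (LSat.step h1 True.intro ⟨a, rfl, ha⟩) ((ihP s' r').mp hP))
        · exact LSat.plusCStep (LSat.step h1 True.intro ⟨a, rfl, ha⟩) ((ihr _ _ _).mp hF)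
      · intro h
        cases r' with
        | nil =>
          simp only [diagOf] at h
          cases h with
          | plusCBase h' =>
            cases h' with
            | stepC h'' hP =>
              cases h'' with
              | step h1 _ h3 =>
                obtain ⟨b, hb, hbo⟩ := h3
                exact ⟨h1, hb ▸ hbo, Or.inl ((ihP s' _).mpr hP)⟩
          | plusCStep h' htail =>
            cases h' with
            | step h1 _ h3 =>
              obtain ⟨b, hb, hbo⟩ := h3
              exact ⟨h1, hb ▸ hbo, Or.inr ((ihr _ _ _).mpr htail)⟩
        | cons q r2 =>
          simp only [diagOf] at h
          cases h with
          | plusCBase h' =>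
            cases h' with
            | stepC h'' hP =>
              cases h'' with
              | step h1 _ h3 =>
                obtain ⟨b, hb, hbo⟩ := h3
                exact ⟨h1, hb ▸ hbo, Or.inl ((ihP s' _).mpr hP)⟩
          | plusCStep h' htail =>
            cases h' with
            | step h1 _ h3 =>
              obtain ⟨b, hb, hbo⟩ := h3
              exact ⟨h1, hb ▸ hbo, Or.inr ((ihr _ _ _).mpr htail)⟩

end AuxProof

/-- Let `w` be a path in the KTS `K` of an information diagram
`I`, and `P` a flow kind. Then `w ⊨_l enc(P)` iff `π_w ▷_I P`. -/
theorem kts_path_encoding {N O : Type} (I : IFD N O)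
    (w : FinPath N O) (hw : KTSPath I w) (P : LKind N O) :
    FSat (labelOf I) (encK P) w ↔ LSat I w.toDiagram P := by
  exact fsat_iff_lsat I P w.first w.rest
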